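/- In any finite-horizon MDP with deterministic transitions and deterministic rewards, any policy that maximizes the expected cumulative reward E[∑_{t=0}^{T-1} r̃_t] also maximizes E[max_{k ∈ {−1,...,T−1}} ∑_{t=0}^{k} r̃_t], provided the agent can choose, at every state, an action with reward 0 that keeps the state unchanged (a 'do nothing' action), and the horizon is fixed. Concretely: for a deterministic environment with a zero-reward self-loop action available at every state, the maximum over policies of the best intermediate cumulative reward equals the maximum over policies of the final cumulative reward. -/

import Mathlib

/-- State at time `t` of a deterministic environment with transition function
`step`, initial state `s0`, under the action sequence `a` (horizon `T`). -/
def detState {S A : Type} (T : ℕ) (step : S → A → S) (s0 : S)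
    (a : Fin T → A) : ℕ → S
  | 0 => s0
  | t + 1 => if h : t < T then step (detState T step s0 a t) (a ⟨t, h⟩)
             else detState T step s0 a t

/-- Reward obtained at time `t` (zero beyond the horizon). -/
def detReward {S A : Type} (T : ℕ) (step : S → A → S) (reward : S → A → ℝ)
    (s0 : S) (a : Fin T → A) (t : ℕ) : ℝ :=
  if h : t < T then reward (detState T step s0 a t) (a ⟨t, h⟩) else 0

/-!
A prefix sum of rewards is itself a total reward: follow the action sequence for the first `k`
steps and then play the zero-reward self-loop at the state reached. Since the environment is
deterministic, this stopped sequence collects exactly the `k`-th prefix sum, so the best prefix sum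
is attained as a total reward; conversely the total reward is the prefix sum with `k = T`.
-/

section HaltAfter

variable {S A : Type} {T : ℕ} (step : S → A → S) (reward : S → A → ℝ) (s0 : S)

def haltAfter (noop : S → A) (a : Fin T → A) (k : ℕ) : Fin T → A :=
  fun i => if (i : ℕ) < k then a i else noop (detState T step s0 a k)

theorem detState_congr_of_le {a a' : Fin T → A} {k : ℕ}
    (h : ∀ i : Fin T, (i : ℕ) < k → a' i = a i) {t : ℕ} (ht : t ≤ k) :
    detState T step s0 a' t = detState T step s0 a t := by
  induction t with
  | zero => rfl
  | succ n ih =>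
    simp only [detState]
    rw [ih (by omega)]
    split_ifs with hn
    · rw [h ⟨n, hn⟩ (by simpa using ht)]
    · rfl

variable {step} {reward} (noop : S → A)

theorem detState_haltAfter (hstep : ∀ s, step s (noop s) = s) (a : Fin T → A) (k t : ℕ) :
    detState T step s0 (haltAfter step s0 noop a k) t = detState T step s0 a (min t k) := by
  have hagree : ∀ i : Fin T, (i : ℕ) < k → haltAfter step s0 noop a k i = a i :=
    fun i hi => if_pos hi
  induction t with
  | zero => rfl
  | succ n ih =>
    rcases Nat.lt_or_ge n k with hn | hn
    · rw [detState_congr_of_le step s0 hagree hn, min_eq_left hn]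
    · simp only [detState]
      rw [ih, min_eq_right hn, min_eq_right (by omega)]
      split_ifs with hnT
      · rw [haltAfter, if_neg (by simpa using hn), hstep]
      · rfl

theorem detReward_haltAfter (hstep : ∀ s, step s (noop s) = s)
    (hrew : ∀ s, reward s (noop s) = 0) (a : Fin T → A) (k t : ℕ) :
    detReward T step reward s0 (haltAfter step s0 noop a k) t =
      if t < k then detReward T step reward s0 a t else 0 := by
  unfold detReward
  rw [detState_haltAfter s0 noop hstep]
  split_ifs with htT htk htk
  · rw [min_eq_left htk.le, haltAfter, if_pos htk]
  · rw [min_eq_right (not_lt.mp htk), haltAfter, if_neg htk, hrew]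
  all_goals rfl

theorem sum_detReward_haltAfter (hstep : ∀ s, step s (noop s) = s)
    (hrew : ∀ s, reward s (noop s) = 0) (a : Fin T → A) {k : ℕ} (hk : k ≤ T) :
    ∑ t ∈ Finset.range T, detReward T step reward s0 (haltAfter step s0 noop a k) t =
      ∑ t ∈ Finset.range k, detReward T step reward s0 a t := by
  simp_rw [detReward_haltAfter s0 noop hstep hrew, Finset.sum_ite, Finset.sum_const_zero,
    add_zero]
  congr 1
  ext t
  simp only [Finset.mem_filter, Finset.mem_range]
  omega

end HaltAfter

/-- In a finite-horizon MDP with deterministic transitions and rewards, if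
every state has a zero-reward 'do nothing' action (a self-loop with reward 0),
then the best achievable maximum intermediate cumulative reward (over prefixes
`k ∈ {−1, …, T−1}`, the empty prefix giving 0) equals the best achievable
final cumulative reward; in particular any policy maximizing the cumulative
reward also maximizes the maximum-prefix-sum objective. In a deterministic
environment, policies are equivalent to action sequences `Fin T → A`. -/
theorem det_max_prefix_eq_det_total {S A : Type} [Fintype A] [Nonempty A]
    (T : ℕ) (step : S → A → S) (reward : S → A → ℝ) (s0 : S)
    (noop : S → A)
    (hstep : ∀ s, step s (noop s) = s) (hrew : ∀ s, reward s (noop s) = 0) :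
    (Finset.univ : Finset (Fin T → A)).sup' Finset.univ_nonempty
        (fun a => (Finset.range (T + 1)).sup'
          (Finset.nonempty_range_iff.mpr (by omega))
          (fun k => ∑ t ∈ Finset.range k, detReward T step reward s0 a t)) =
      (Finset.univ : Finset (Fin T → A)).sup' Finset.univ_nonempty
        (fun a => ∑ t ∈ Finset.range T, detReward T step reward s0 a t) := by
  apply le_antisymm
  · refine Finset.sup'_le _ _ fun a _ => Finset.sup'_le _ _ fun k hk => ?_
    have hkT : k ≤ T := Nat.lt_succ_iff.mp (Finset.mem_range.mp hk)
    rw [← sum_detReward_haltAfter s0 noop hstep hrew a hkT]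
    exact Finset.le_sup' (fun b => ∑ t ∈ Finset.range T, detReward T step reward s0 b t)
      (Finset.mem_univ _)
  · exact Finset.sup'_mono_fun fun a _ =>
      Finset.le_sup' (fun k => ∑ t ∈ Finset.range k, detReward T step reward s0 a t)
        (Finset.self_mem_range_succ T)
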